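/- Let P = (X - Y)/√2 and θ ∈ ℝ, and let |χ⟩ = exp(i·θ·(P⊗P))·|00⟩ on two qubits. Let h^EPR = (1/2)(I⊗I + X⊗X - Y⊗Y + Z⊗Z). Then ⟨χ| h^EPR |χ⟩ = 1 + 2·cos θ·sin θ, and the reduced density matrix of |χ⟩⟨χ| on the first qubit equals cos(2θ)·|0⟩⟨0| + 2 sin²θ·(I/2) = (1/2)(I + cos(2θ)·Z). -/

import Mathlib

/-!
Since `P * P = 1`, also `(P ⊗ P)² = 1`, so the exponential series splits into its even and odd
parts and `exp (iθ P⊗P) = cos θ + i sin θ P⊗P`. As `P|0⟩ = ((1 - i)/√2)|1⟩`, we get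
`(P ⊗ P)|00⟩ = -i|11⟩` and hence `|χ⟩ = cos θ|00⟩ + sin θ|11⟩`. The operator `h^EPR` sends both
`|00⟩` and `|11⟩` to `|00⟩ + |11⟩`, so its expectation is `(cos θ + sin θ)² = 1 + 2 cos θ sin θ`,
and the reduced state is `diag (cos² θ, sin² θ) = (I + cos 2θ Z)/2`.
-/

open Kronecker Matrix

noncomputable def pauliX : Matrix (Fin 2) (Fin 2) ℂ := !![0, 1; 1, 0]
noncomputable def pauliY : Matrix (Fin 2) (Fin 2) ℂ := !![0, -Complex.I; Complex.I, 0]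
noncomputable def pauliZ : Matrix (Fin 2) (Fin 2) ℂ := !![1, 0; 0, -1]

/-- `P = (X - Y)/√2`. -/
noncomputable def pOp : Matrix (Fin 2) (Fin 2) ℂ :=
  ((1 : ℂ) / Real.sqrt 2) • (pauliX - pauliY)

/-- `|00⟩` as a vector of `ℂ² ⊗ ℂ²`. -/
noncomputable def ket00 : Fin 2 × Fin 2 → ℂ := fun p =>
  if p = ((0 : Fin 2), (0 : Fin 2)) then 1 else 0

open Complex in
theorem NormedSpace.exp_I_mul_smul_of_mul_self_eq_one {𝔸 : Type*} [Ring 𝔸] [Algebra ℂ 𝔸]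
    [TopologicalSpace 𝔸] [IsTopologicalRing 𝔸] [ContinuousSMul ℂ 𝔸] [T2Space 𝔸]
    {M : 𝔸} (hM : M * M = 1) (z : ℂ) :
    exp ((I * z) • M) = cos z • (1 : 𝔸) + (I * sin z) • M := by
  have hpow_even (k : ℕ) : M ^ (2 * k) = 1 := by rw [pow_mul, sq, hM, one_pow]
  have hterm (n : ℕ) : ((n.factorial : ℂ)⁻¹) • ((I * z) • M) ^ n
      = ((z * I) ^ n / n.factorial) • M ^ n := by
    rw [smul_pow, smul_smul, mul_comm I z, div_eq_inv_mul]
  rw [exp_eq_tsum ℂ]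
  refine HasSum.tsum_eq (HasSum.even_add_odd ?_ ?_)
  · simpa only [hterm, hpow_even] using (hasSum_cos' z).smul_const (1 : 𝔸)
  · convert ((hasSum_sin' z).mul_left I).smul_const M using 2 with k
    rw [hterm, pow_succ M, hpow_even, one_mul, mul_div_cancel₀ _ I_ne_zero]

def Matrix.partialTraceRight {m n R : Type*} [Fintype n] [AddCommMonoid R]
    (ρ : Matrix (m × n) (m × n) R) : Matrix m m R :=
  of fun a b => ∑ k, ρ (a, k) (b, k)

noncomputable def ket11 : Fin 2 × Fin 2 → ℂ := fun p =>
  if p = ((1 : Fin 2), (1 : Fin 2)) then 1 else 0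

noncomputable def schmidtState (a b : ℂ) : Fin 2 × Fin 2 → ℂ := a • ket00 + b • ket11

noncomputable def eprHamiltonian : Matrix (Fin 2 × Fin 2) (Fin 2 × Fin 2) ℂ :=
  (1 / 2 : ℂ) • ((1 : Matrix (Fin 2) (Fin 2) ℂ) ⊗ₖ (1 : Matrix (Fin 2) (Fin 2) ℂ)
    + pauliX ⊗ₖ pauliX - pauliY ⊗ₖ pauliY + pauliZ ⊗ₖ pauliZ)

lemma ofReal_sqrt_two_mul_self : (Real.sqrt 2 : ℂ) * Real.sqrt 2 = 2 := by
  exact_mod_cast Real.mul_self_sqrt zero_le_two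

lemma pauliX_sub_pauliY_mul_self : (pauliX - pauliY) * (pauliX - pauliY) = (2 : ℂ) • 1 := by
  ext i j
  fin_cases i <;> fin_cases j <;> simp [pauliX, pauliY, mul_apply, Fin.sum_univ_two] <;>
    linear_combination -Complex.I_sq

lemma pOp_mul_self : pOp * pOp = 1 := by
  rw [pOp, smul_mul_smul_comm, pauliX_sub_pauliY_mul_self, smul_smul, div_mul_div_comm, one_mul,
    ofReal_sqrt_two_mul_self, one_div_mul_cancel two_ne_zero, one_smul]

lemma pOp_kronecker_pOp_mulVec_ket00 : (pOp ⊗ₖ pOp) *ᵥ ket00 = (-Complex.I) • ket11 := by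
  ext ⟨i, j⟩
  fin_cases i <;> fin_cases j <;> simp [pOp, pauliX, pauliY, ket00, ket11, mulVec, dotProduct]
  rw [mul_mul_mul_comm, ← mul_inv, ofReal_sqrt_two_mul_self]
  linear_combination (1 / 2 : ℂ) * Complex.I_sq

lemma exp_pOp_kronecker_pOp_mulVec_ket00 (θ : ℝ) :
    NormedSpace.exp (Complex.I • (θ : ℂ) • (pOp ⊗ₖ pOp)) *ᵥ ket00
      = schmidtState (Real.cos θ) (Real.sin θ) := by
  have hinv : (pOp ⊗ₖ pOp) * (pOp ⊗ₖ pOp) = 1 := by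
    rw [← mul_kronecker_mul, pOp_mul_self, one_kronecker_one]
  rw [smul_smul, NormedSpace.exp_I_mul_smul_of_mul_self_eq_one hinv, add_mulVec, smul_mulVec,
    smul_mulVec, one_mulVec, pOp_kronecker_pOp_mulVec_ket00, smul_smul, schmidtState,
    ← Complex.ofReal_cos, ← Complex.ofReal_sin]
  congr 2
  rw [mul_neg, mul_right_comm, Complex.I_mul_I]
  ring

lemma eprHamiltonian_mulVec_schmidtState (a b : ℂ) :
    eprHamiltonian *ᵥ schmidtState a b = (a + b) • (ket00 + ket11) := by
  ext ⟨i, j⟩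
  fin_cases i <;> fin_cases j <;>
    simp [eprHamiltonian, schmidtState, ket00, ket11, pauliX, pauliY, pauliZ, mulVec, dotProduct,
      Fintype.sum_prod_type, one_apply] <;> ring

lemma star_schmidtState_dotProduct_eprHamiltonian_mulVec (a b : ℝ) :
    star (schmidtState a b) ⬝ᵥ eprHamiltonian *ᵥ schmidtState a b = ((a + b) ^ 2 : ℝ) := by
  rw [eprHamiltonian_mulVec_schmidtState]
  simp [schmidtState, ket00, ket11, dotProduct, Fintype.sum_prod_type]
  ring

lemma partialTraceRight_schmidtState (a b : ℝ) (hab : a ^ 2 + b ^ 2 = 1) :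
    (vecMulVec (schmidtState a b) (star (schmidtState a b))).partialTraceRight
      = (1 / 2 : ℂ) • (1 + ((a ^ 2 - b ^ 2 : ℝ) : ℂ) • pauliZ) := by
  have hab' : (a : ℂ) ^ 2 + (b : ℂ) ^ 2 = 1 := by exact_mod_cast hab
  ext i j
  fin_cases i <;> fin_cases j <;>
    simp [partialTraceRight, schmidtState, ket00, ket11, vecMulVec_apply, pauliZ] <;>
    linear_combination (1 / 2 : ℂ) * hab'

theorem epr_partial_entangling (θ : ℝ) :
    let χ : Fin 2 × Fin 2 → ℂ :=
      (NormedSpace.exp (Complex.I • (θ : ℂ) • (pOp ⊗ₖ pOp))).mulVec ket00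
    let hEPR : Matrix (Fin 2 × Fin 2) (Fin 2 × Fin 2) ℂ :=
      (1 / 2 : ℂ) • ((1 : Matrix (Fin 2) (Fin 2) ℂ) ⊗ₖ (1 : Matrix (Fin 2) (Fin 2) ℂ)
        + pauliX ⊗ₖ pauliX - pauliY ⊗ₖ pauliY + pauliZ ⊗ₖ pauliZ)
    (star χ) ⬝ᵥ hEPR.mulVec χ = ((1 + 2 * Real.cos θ * Real.sin θ : ℝ) : ℂ) ∧
      (Matrix.of fun a b : Fin 2 => ∑ k : Fin 2, (Matrix.vecMulVec χ (star χ)) (a, k) (b, k))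
        = (1 / 2 : ℂ) • ((1 : Matrix (Fin 2) (Fin 2) ℂ)
            + ((Real.cos (2 * θ) : ℝ) : ℂ) • pauliZ) := by
  intro χ hEPR
  have hχ : χ = schmidtState (Real.cos θ) (Real.sin θ) := exp_pOp_kronecker_pOp_mulVec_ket00 θ
  have hunit : Real.cos θ ^ 2 + Real.sin θ ^ 2 = 1 := Real.cos_sq_add_sin_sq θ
  constructor
  · rw [show hEPR = eprHamiltonian from rfl, hχ,
      star_schmidtState_dotProduct_eprHamiltonian_mulVec]
    congr 1
    linear_combination hunit
  · change partialTraceRight (vecMulVec χ (star χ)) = _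
    rw [hχ, partialTraceRight_schmidtState _ _ hunit, Real.cos_two_mul']
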